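/- arXiv:math/0607660 — 3 statements merged into one kernel-verified Lean document; each statement's English description precedes it below -/
import Mathlib

section
/- Let R be a commutative Noetherian ring of prime characteristic p whose Frobenius endomorphism is finite and flat, and let q = p^e with e ≥ 1. Suppose that R is free as a module over itself with scalars acting through the e-th iterate of Frobenius (equivalently, R is free over its subring R^q of q-th powers), with basis e_1, …, e_N. Let h_1, …, h_s be generators of an ideal b of R, and write h_i = Σ_{j=1}^N a_{i,j}^q e_j with a_{i,j} ∈ R for each i. Then b^{[1/q]} is the ideal generated by all the elements a_{i,j} for 1 ≤ i ≤ s and 1 ≤ j ≤ N. -/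
open Ideal

/-- The `q`-th bracket power `J^{[q]}` of an ideal: the ideal generated by
the `q`-th powers of the elements of `J`. -/
def bracketPow {R : Type*} [CommRing R] (J : Ideal R) (q : ℕ) : Ideal R :=
  Ideal.span ((fun x => x ^ q) '' (J : Set R))

/-- The ideal `b^{[1/q]}`: the smallest ideal `J` with `b ⊆ J^{[q]}`
(realized as the intersection of all such ideals). -/
def frobRoot {R : Type*} [CommRing R] (b : Ideal R) (q : ℕ) : Ideal R :=
  sInf {J : Ideal R | b ≤ bracketPow J q}

/-- The generalized test ideal `τ(a^c) = ⋃_{e ≥ 1} (a^{⌈c p^e⌉})^{[1/p^e]}`. -/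
noncomputable def testIdeal {R : Type*} [CommRing R] (p : ℕ) (a : Ideal R) (c : ℝ) : Ideal R :=
  ⨆ e : ℕ, frobRoot (a ^ ⌈c * (p : ℝ) ^ (e + 1)⌉₊) (p ^ (e + 1))

/-- `ν_a^J(q)`: the largest nonnegative integer `r` with `a^r ⊄ J^{[q]}`
(and `0` if there is no such `r`). -/
noncomputable def nuF {R : Type*} [CommRing R] (a J : Ideal R) (q : ℕ) : ℕ :=
  sSup {r : ℕ | ¬ a ^ r ≤ bracketPow J q}

/-- The F-threshold `c^J(a) = sup_{e ≥ 1} ν_a^J(p^e)/p^e`. -/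
noncomputable def FThreshold {R : Type*} [CommRing R] (p : ℕ) (a J : Ideal R) : ℝ :=
  ⨆ e : ℕ, (nuF a J (p ^ (e + 1)) : ℝ) / (p : ℝ) ^ (e + 1)

/-- `α > 0` is an F-jumping exponent of `a` if `τ(a^α) ≠ τ(a^c)` for all `0 ≤ c < α`. -/
def IsFJumpingExponent {R : Type*} [CommRing R] (p : ℕ) (a : Ideal R) (α : ℝ) : Prop :=
  0 < α ∧ ∀ c : ℝ, 0 ≤ c → c < α → testIdeal p a c ≠ testIdeal p a α

/-! Put `φ = F^e`, so that `J^{[q]} = φ(J) R`. Since the `E_j` span `R` over `φ(R)`, the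
elements of `φ(J) R` are exactly the sums `∑ φ(c_j) E_j` with all `c_j ∈ J`. Flatness of
Frobenius makes `R` reduced: if `x^p = 0`, the equational criterion applied to `x • 1 = 0`
writes `1` as a combination of `p`-th powers of elements of `ann x`, and `ann x` is stable under
`p`-th powers. So `φ` is injective, the coefficients of `∑ φ(c_j) E_j` are unique, and
`b ⊆ J^{[q]}` holds exactly when every `A_{ij}` lies in `J`. -/

theorem RingHom.Flat.map_annihilator_eq_top_of_map_eq_zero {R S : Type*} [CommRing R]
    [CommRing S] {f : R →+* S} (hf : f.Flat) {x : R} (hx : f x = 0) :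
    Ideal.map f (Submodule.span R {x}).annihilator = ⊤ := by
  algebraize [f]
  have hrel : ∑ _i : Fin 1, x • (1 : S) = 0 := by
    rw [Fin.sum_univ_one, Algebra.smul_def, mul_one]; exact hx
  obtain ⟨k, a, y, hy, ha⟩ := Module.Flat.isTrivialRelation_of_sum_smul_eq_zero
    (f := fun _ : Fin 1 => x) (x := fun _ => (1 : S)) hrel
  rw [eq_top_iff_one, show (1 : S) = _ from hy 0]
  refine Ideal.sum_mem _ fun j _ => Ideal.mul_mem_right _ _ (Ideal.mem_map_of_mem f ?_)
  rw [Submodule.mem_annihilator_span_singleton, smul_eq_mul, mul_comm]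
  simpa using ha j

theorem isReduced_of_flat_frobenius {R : Type*} [CommRing R] (p : ℕ) [Fact p.Prime] [CharP R p]
    (hflat : (frobenius R p).Flat) : IsReduced R := by
  refine (isReduced_iff_pow_one_lt p (Fact.out : p.Prime).one_lt).2 fun x hx => ?_
  have hx' : frobenius R p x = 0 := by rwa [frobenius_def]
  have hmap : Ideal.map (frobenius R p) (Submodule.span R {x}).annihilator ≤
      (Submodule.span R {x}).annihilator :=
    Ideal.map_le_of_le_comap fun a ha => Ideal.pow_mem_of_mem _ ha p (Fact.out : p.Prime).pos
  rw [hflat.map_annihilator_eq_top_of_map_eq_zero hx', top_le_iff] at hmap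
  have hone : (1 : R) ∈ (Submodule.span R {x}).annihilator := hmap ▸ Submodule.mem_top
  rw [Submodule.mem_annihilator_span_singleton, one_smul] at hone
  exact hone

theorem bracketPow_pow_eq_map_iterateFrobenius {R : Type*} [CommRing R] (p : ℕ) [ExpChar R p]
    (e : ℕ) (J : Ideal R) : bracketPow J (p ^ e) = J.map (iterateFrobenius R p e) :=
  rfl

section SpanningFamily

variable {R S ι : Type*} [CommRing R] [CommRing S] [Fintype ι] {f : R →+* S} {E : ι → S}

theorem Ideal.mem_map_iff_exists_sum_of_forall_eq_sum
    (hspan : ∀ y, ∃ a : ι → R, y = ∑ j, f (a j) * E j) (J : Ideal R) (y : S) :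
    y ∈ J.map f ↔ ∃ c : ι → R, (∀ j, c j ∈ J) ∧ y = ∑ j, f (c j) * E j := by
  algebraize [f]
  have htop : Submodule.span R (Set.range E) = ⊤ := by
    refine eq_top_iff.2 fun y _ => ?_
    obtain ⟨a, rfl⟩ := hspan y
    exact Submodule.sum_mem _ fun j _ =>
      Submodule.smul_mem _ (a j) (Submodule.subset_span ⟨j, rfl⟩)
  rw [← Submodule.restrictScalars_mem R, show J.map f = J.map (algebraMap R S) from rfl,
    ← Ideal.smul_top_eq_map, ← htop, Submodule.mem_ideal_smul_span_iff_exists_sum]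
  constructor
  · rintro ⟨a, ha, rfl⟩
    exact ⟨a, ha, by simp [Finsupp.sum_fintype, Algebra.smul_def, RingHom.algebraMap_toAlgebra]⟩
  · rintro ⟨c, hc, rfl⟩
    refine ⟨Finsupp.equivFunOnFinite.symm c, hc, ?_⟩
    simp [Finsupp.sum_fintype, Algebra.smul_def, RingHom.algebraMap_toAlgebra]

theorem eq_of_sum_map_mul_eq_sum_map_mul
    (hindep : ∀ a : ι → R, ∑ j, f (a j) * E j = 0 → ∀ j, a j = 0) {a c : ι → R}
    (h : ∑ j, f (a j) * E j = ∑ j, f (c j) * E j) : a = c := by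
  refine funext fun j => sub_eq_zero.1 (hindep (a - c) ?_ j)
  simp only [Pi.sub_apply, map_sub, sub_mul, Finset.sum_sub_distrib, h, sub_self]

theorem Ideal.span_range_le_map_iff {κ : Type*}
    (hspan : ∀ y, ∃ a : ι → R, y = ∑ j, f (a j) * E j)
    (hindep : ∀ a : ι → R, ∑ j, f (a j) * E j = 0 → ∀ j, a j = 0)
    {h : κ → S} {A : κ → ι → R} (hA : ∀ i, h i = ∑ j, f (A i j) * E j) (J : Ideal R) :
    Ideal.span (Set.range h) ≤ J.map f ↔
      Ideal.span (Set.range fun ij : κ × ι => A ij.1 ij.2) ≤ J := by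
  simp only [Ideal.span_le, Set.range_subset_iff, SetLike.mem_coe, Prod.forall,
    Ideal.mem_map_iff_exists_sum_of_forall_eq_sum hspan]
  refine forall_congr' fun i => ⟨fun ⟨c, hc, hi⟩ j => ?_, fun hAJ => ⟨A i, hAJ, hA i⟩⟩
  rw [eq_of_sum_map_mul_eq_sum_map_mul hindep ((hA i).symm.trans hi)]
  exact hc j

end SpanningFamily

theorem stmt2_frobRoot_eq_span_of_basis_general
    {R : Type*} [CommRing R] (p : ℕ) [Fact p.Prime] [CharP R p]
    (hflat : (frobenius R p).Flat)
    (e : ℕ) (q : ℕ) (hq : q = p ^ e)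
    (N : ℕ) (E : Fin N → R)
    (hspan : ∀ x : R, ∃ a : Fin N → R, x = ∑ j, a j ^ q * E j)
    (hindep : ∀ a : Fin N → R, ∑ j, a j ^ q * E j = 0 → ∀ j, a j ^ q = 0)
    (s : ℕ) (b : Ideal R) (h : Fin s → R) (hgen : b = Ideal.span (Set.range h))
    (A : Fin s → Fin N → R) (hA : ∀ i, h i = ∑ j, A i j ^ q * E j) :
    frobRoot b q = Ideal.span (Set.range fun ij : Fin s × Fin N => A ij.1 ij.2) := by
  subst hq hgen
  have := isReduced_of_flat_frobenius p hflat
  have hindep' :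
      ∀ a : Fin N → R, ∑ j, iterateFrobenius R p e (a j) * E j = 0 → ∀ j, a j = 0 :=
    fun a ha j => (pow_eq_zero_iff (pow_ne_zero e (Fact.out : p.Prime).ne_zero)).1 (hindep a ha j)
  rw [frobRoot]
  simp_rw [bracketPow_pow_eq_map_iterateFrobenius, Ideal.span_range_le_map_iff hspan hindep' hA]
  exact csInf_Ici

/-- description of `b^{[1/q]}` via a basis of `R` over `R^q`. -/
theorem stmt2_frobRoot_eq_span_of_basis
    {R : Type*} [CommRing R] [IsNoetherianRing R] (p : ℕ) [Fact p.Prime] [CharP R p]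
    (hfin : (frobenius R p).Finite) (hflat : (frobenius R p).Flat)
    (e : ℕ) (he : 1 ≤ e) (q : ℕ) (hq : q = p ^ e)
    (N : ℕ) (E : Fin N → R)
    (hspan : ∀ x : R, ∃ a : Fin N → R, x = ∑ j, a j ^ q * E j)
    (hindep : ∀ a : Fin N → R, ∑ j, a j ^ q * E j = 0 → ∀ j, a j ^ q = 0)
    (s : ℕ) (b : Ideal R) (h : Fin s → R) (hgen : b = Ideal.span (Set.range h))
    (A : Fin s → Fin N → R) (hA : ∀ i, h i = ∑ j, A i j ^ q * E j) :
    frobRoot b q = Ideal.span (Set.range fun ij : Fin s × Fin N => A ij.1 ij.2) :=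
  stmt2_frobRoot_eq_span_of_basis_general p hflat e q hq N E hspan hindep s b h hgen A hA
end

section
/- Let R be a commutative Noetherian ring of prime characteristic p whose Frobenius endomorphism is finite and flat, let a be an ideal of R, and let c ≥ 0 be a real number. Then for every e ≥ 1 one has (a^{⌈c p^e⌉})^{[1/p^e]} ⊆ (a^{⌈c p^{e+1}⌉})^{[1/p^{e+1}]}, and this increasing chain of ideals stabilizes: there exists e_0 ≥ 1 such that for all e ≥ e_0 the ideal (a^{⌈c p^e⌉})^{[1/p^e]} equals the generalized test ideal τ(a^c) = ⋃_{e≥1} (a^{⌈c p^e⌉})^{[1/p^e]}. -/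
open Ideal

/-! A flat Frobenius is faithfully flat, because it induces the identity on `Spec R`; hence
`J ↦ J^{[p]}` reflects inclusions. If `a^{⌈c p^{e+1}⌉} ⊆ J^{[p^{e+1}]}`, then
`(a^{⌈c p^e⌉})^{[p]} ⊆ a^{p ⌈c p^e⌉} ⊆ a^{⌈c p^{e+1}⌉} ⊆ (J^{[p^e]})^{[p]}`, so `a^{⌈c p^e⌉} ⊆ J^{[p^e]}`:
the chain increases. An ascending chain of ideals of a Noetherian ring stabilizes at its union. -/

theorem Monotone.exists_forall_ge_eq_iSup {α : Type*} [CompleteLattice α] [WellFoundedGT α]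
    {f : ℕ → α} (hf : Monotone f) : ∃ n, ∀ m ≥ n, f m = ⨆ i, f i := by
  obtain ⟨n, hn⟩ := WellFoundedGT.monotone_chain_condition ⟨f, hf⟩
  refine ⟨n, fun m hm => le_antisymm (le_iSup f m) (iSup_le fun i => ?_)⟩
  calc f i ≤ f (max i m) := hf (le_max_left i m)
    _ = f m := (hn _ (hm.trans (le_max_right i m))).symm.trans (hn m hm)

theorem Nat.ceil_mul_natCast_le {x : ℝ} (n : ℕ) : ⌈x * n⌉₊ ≤ ⌈x⌉₊ * n := by
  rw [Nat.ceil_le, Nat.cast_mul]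
  exact mul_le_mul_of_nonneg_right (Nat.le_ceil x) n.cast_nonneg

theorem RingHom.FaithfullyFlat.map_le_map_iff {R S : Type*} [CommRing R] [CommRing S]
    {f : R →+* S} (hf : f.FaithfullyFlat) {I K : Ideal R} : I.map f ≤ K.map f ↔ I ≤ K := by
  algebraize [f]
  refine ⟨fun h => ?_, Ideal.map_mono⟩
  rw [← Ideal.comap_map_eq_self_of_faithfullyFlat (B := S) I,
    ← Ideal.comap_map_eq_self_of_faithfullyFlat (B := S) K]
  exact Ideal.comap_mono h

section BracketPow

variable {R : Type*} [CommRing R]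

theorem bracketPow_le_pow (J : Ideal R) (q : ℕ) : bracketPow J q ≤ J ^ q :=
  Ideal.span_le.mpr <| Set.image_subset_iff.mpr fun _ hx => Ideal.pow_mem_pow hx q

theorem bracketPow_mul_le (J : Ideal R) (q r : ℕ) :
    bracketPow J (q * r) ≤ bracketPow (bracketPow J q) r := by
  refine Ideal.span_le.mpr <| Set.image_subset_iff.mpr fun x hx => ?_
  rw [Set.mem_preimage, pow_mul]
  exact Ideal.subset_span ⟨x ^ q, Ideal.subset_span ⟨x, hx, rfl⟩, rfl⟩

variable (p : ℕ) [ExpChar R p]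

theorem Ideal.comap_frobenius_of_isPrime (P : Ideal R) [hP : P.IsPrime] :
    P.comap (frobenius R p) = P := by
  ext x
  exact hP.pow_mem_iff_mem p (expChar_pos R p)

theorem faithfullyFlat_frobenius_of_flat (hflat : (frobenius R p).Flat) :
    (frobenius R p : R →+* R).FaithfullyFlat :=
  RingHom.FaithfullyFlat.iff_flat_and_comap_surjective.mpr
    ⟨hflat, fun P => ⟨P, PrimeSpectrum.ext (P.asIdeal.comap_frobenius_of_isPrime p)⟩⟩

theorem map_frobenius_eq_bracketPow (J : Ideal R) : J.map (frobenius R p) = bracketPow J p :=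
  rfl

theorem bracketPow_le_bracketPow_iff (hflat : (frobenius R p).Flat) {I K : Ideal R} :
    bracketPow I p ≤ bracketPow K p ↔ I ≤ K := by
  rw [← map_frobenius_eq_bracketPow, ← map_frobenius_eq_bracketPow]
  exact (faithfullyFlat_frobenius_of_flat p hflat).map_le_map_iff

theorem frobRoot_le_frobRoot_mul (hflat : (frobenius R p).Flat) {b b' : Ideal R}
    (h : bracketPow b p ≤ b') (q : ℕ) : frobRoot b q ≤ frobRoot b' (q * p) :=
  sInf_le_sInf fun J hJ => (bracketPow_le_bracketPow_iff p hflat).mp <|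
    h.trans (hJ.trans (bracketPow_mul_le J q p))

theorem frobRoot_pow_ceil_le_succ (hflat : (frobenius R p).Flat) (a : Ideal R) (c : ℝ) (e : ℕ) :
    frobRoot (a ^ ⌈c * (p : ℝ) ^ e⌉₊) (p ^ e) ≤
      frobRoot (a ^ ⌈c * (p : ℝ) ^ (e + 1)⌉₊) (p ^ (e + 1)) := by
  refine pow_succ p e ▸ frobRoot_le_frobRoot_mul p hflat ?_ (p ^ e)
  calc bracketPow (a ^ ⌈c * (p : ℝ) ^ e⌉₊) p
      ≤ a ^ (⌈c * (p : ℝ) ^ e⌉₊ * p) := (bracketPow_le_pow _ p).trans_eq (pow_mul a _ p).symm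
    _ ≤ a ^ ⌈c * (p : ℝ) ^ (e + 1)⌉₊ := by
      rw [pow_succ, ← mul_assoc]
      exact Ideal.pow_le_pow_right (Nat.ceil_mul_natCast_le p)

end BracketPow

theorem stmt4_testIdeal_chain_stabilizes_general
    {R : Type*} [CommRing R] [IsNoetherianRing R] (p : ℕ) [Fact p.Prime] [CharP R p]
    (hflat : (frobenius R p).Flat)
    (a : Ideal R) (c : ℝ) :
    (∀ e : ℕ, 1 ≤ e →
      frobRoot (a ^ ⌈c * (p : ℝ) ^ e⌉₊) (p ^ e) ≤
        frobRoot (a ^ ⌈c * (p : ℝ) ^ (e + 1)⌉₊) (p ^ (e + 1))) ∧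
    ∃ e₀ : ℕ, 1 ≤ e₀ ∧ ∀ e : ℕ, e₀ ≤ e →
      frobRoot (a ^ ⌈c * (p : ℝ) ^ e⌉₊) (p ^ e) = testIdeal p a c := by
  set chain : ℕ → Ideal R := fun e => frobRoot (a ^ ⌈c * (p : ℝ) ^ e⌉₊) (p ^ e)
  have hchain : Monotone chain := monotone_nat_of_le_succ (frobRoot_pow_ceil_le_succ p hflat a c)
  have htest : testIdeal p a c = ⨆ e, chain e := hchain.iSup_nat_add 1
  obtain ⟨n, hn⟩ := hchain.exists_forall_ge_eq_iSup
  refine ⟨fun e _ => hchain e.le_succ, n + 1, Nat.le_add_left 1 n, fun e he => ?_⟩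
  rw [htest]
  exact hn e (n.le_succ.trans he)

/-- the chain `(a^{⌈c p^e⌉})^{[1/p^e]}` is increasing and stabilizes
to the generalized test ideal `τ(a^c)`. -/
theorem stmt4_testIdeal_chain_stabilizes
    {R : Type*} [CommRing R] [IsNoetherianRing R] (p : ℕ) [Fact p.Prime] [CharP R p]
    (hfin : (frobenius R p).Finite) (hflat : (frobenius R p).Flat)
    (a : Ideal R) (c : ℝ) (hc : 0 ≤ c) :
    (∀ e : ℕ, 1 ≤ e →
      frobRoot (a ^ ⌈c * (p : ℝ) ^ e⌉₊) (p ^ e) ≤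
        frobRoot (a ^ ⌈c * (p : ℝ) ^ (e + 1)⌉₊) (p ^ (e + 1))) ∧
    ∃ e₀ : ℕ, 1 ≤ e₀ ∧ ∀ e : ℕ, e₀ ≤ e →
      frobRoot (a ^ ⌈c * (p : ℝ) ^ e⌉₊) (p ^ e) = testIdeal p a c :=
  stmt4_testIdeal_chain_stabilizes_general p hflat a c
end

section
/- Let R be a commutative Noetherian ring of prime characteristic p whose Frobenius endomorphism is finite and flat, let S be a multiplicative subset of R, and let R_S be the localization of R at S (a commutative ring together with the localization map R → R_S). Then the Frobenius endomorphism of R_S is again finite and flat, and for every ideal a of R and every real number c ≥ 0 one has τ((a·R_S)^c) = τ(a^c)·R_S, where a·R_S and τ(a^c)·R_S denote the extensions of these ideals along the localization map. -/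
open Ideal

/-! Over a Noetherian ring a finite flat Frobenius makes `F^e_* R` a projective `R`-module, so
extending ideals along `F^e` commutes with arbitrary intersections and with colons. The first fact
makes `b ↦ b^{[1/q]}` left adjoint to `J ↦ J^{[q]}`; the second makes `J^{[q]}` saturated with
respect to `S` whenever `J` is, i.e. contraction from `R_S` commutes with bracket powers. Passing to
adjoints, `b^{[1/q]} R_S = (b R_S)^{[1/q]}`, and the test ideal, a union of such ideals, localizes.
The Frobenius of `R_S` is the localization of the Frobenius of `R`, as localizing at `S` and at
`{s^p | s ∈ S}` give the same ring. -/

theorem Finsupp.mem_ideal_smul_top_iff {R ι : Type*} [CommRing R] (I : Ideal R) (v : ι →₀ R) :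
    v ∈ I • (⊤ : Submodule R (ι →₀ R)) ↔ ∀ i, v i ∈ I := by
  rw [← Finsupp.submodule_top, ← Finsupp.submodule_smul, Finsupp.mem_submodule_iff]
  simp [smul_eq_mul, Ideal.mul_top]

namespace Module.Projective

variable {R M : Type*} [CommRing R] [AddCommGroup M] [Module R M] [Module.Projective R M]

theorem exists_coords_mem_smul_top_iff : ∃ s : M →ₗ[R] M →₀ R,
    ∀ (I : Ideal R) (x : M), x ∈ I • (⊤ : Submodule R M) ↔ ∀ i, s x i ∈ I := by
  obtain ⟨s, hs⟩ := projective_def'.mp ‹Module.Projective R M›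
  refine ⟨s, fun I x => ?_⟩
  rw [← Finsupp.mem_ideal_smul_top_iff]
  refine ⟨fun hx => Submodule.smul_top_le_comap_smul_top I s hx, fun hsx => ?_⟩
  simpa [← LinearMap.comp_apply, hs] using
    Submodule.smul_top_le_comap_smul_top I (Finsupp.linearCombination R id) hsx

theorem mem_sInf_smul_top_iff (𝒮 : Set (Ideal R)) (x : M) :
    x ∈ sInf 𝒮 • (⊤ : Submodule R M) ↔ ∀ I ∈ 𝒮, x ∈ I • (⊤ : Submodule R M) := by
  obtain ⟨s, hs⟩ := exists_coords_mem_smul_top_iff (R := R) (M := M)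
  simp only [hs, Submodule.mem_sInf]
  exact ⟨fun h I hI i => h i I hI, fun h i I hI => h I hI i⟩

theorem mem_colon_singleton_smul_top_iff (I : Ideal R) (w : R) (x : M) :
    x ∈ I.colon {w} • (⊤ : Submodule R M) ↔ w • x ∈ I • (⊤ : Submodule R M) := by
  obtain ⟨s, hs⟩ := exists_coords_mem_smul_top_iff (R := R) (M := M)
  simp only [hs, Submodule.mem_colon_singleton, map_smul, Finsupp.smul_apply, smul_eq_mul,
    mul_comm]

end Module.Projective

theorem Ideal.mem_map_algebraMap_iff_mem_smul_top {R T : Type*} [CommSemiring R] [CommSemiring T]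
    [Algebra R T] (I : Ideal R) (x : T) :
    x ∈ I.map (algebraMap R T) ↔ x ∈ I • (⊤ : Submodule R T) := by
  rw [Ideal.smul_top_eq_map]; rfl

namespace RingHom

variable {R T : Type*} [CommRing R] [CommRing T] [IsNoetherianRing R] {φ : R →+* T}

theorem Finite.projective_of_flat (hfin : φ.Finite) (hflat : φ.Flat) :
    let := φ.toAlgebra; Module.Projective R T := by
  let := φ.toAlgebra
  have : Module.Finite R T := hfin
  have : Module.Flat R T := hflat
  have : Module.FinitePresentation R T := Module.finitePresentation_of_finite R T
  exact Module.Flat.projective_of_finitePresentation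

theorem Finite.map_sInf_of_flat (hfin : φ.Finite) (hflat : φ.Flat) (𝒮 : Set (Ideal R)) :
    (sInf 𝒮).map φ = ⨅ I ∈ 𝒮, I.map φ := by
  let := φ.toAlgebra
  have := hfin.projective_of_flat hflat
  refine le_antisymm (le_iInf₂ fun I hI => Ideal.map_mono (sInf_le hI)) fun x hx => ?_
  simp only [Submodule.mem_iInf] at hx
  change x ∈ (sInf 𝒮).map (algebraMap R T)
  rw [Ideal.mem_map_algebraMap_iff_mem_smul_top, Module.Projective.mem_sInf_smul_top_iff]
  exact fun I hI => (Ideal.mem_map_algebraMap_iff_mem_smul_top I x).mp (hx I hI)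

theorem Finite.map_colon_singleton_of_flat (hfin : φ.Finite) (hflat : φ.Flat) (I : Ideal R)
    (w : R) : (I.colon {w}).map φ = (I.map φ).colon {φ w} := by
  let := φ.toAlgebra
  have := hfin.projective_of_flat hflat
  ext x
  change x ∈ (I.colon {w}).map (algebraMap R T) ↔
    x ∈ (I.map (algebraMap R T)).colon {algebraMap R T w}
  rw [Submodule.mem_colon_singleton, Ideal.mem_map_algebraMap_iff_mem_smul_top,
    Ideal.mem_map_algebraMap_iff_mem_smul_top, Module.Projective.mem_colon_singleton_smul_top_iff,
    smul_eq_mul, mul_comm, ← Algebra.smul_def]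

end RingHom

theorem IsLocalization.of_le_of_forall_dvd {R S : Type*} [CommSemiring R] [CommSemiring S]
    [Algebra R S] {M N : Submonoid R} [IsLocalization M S] (hNM : N ≤ M)
    (hdvd : ∀ m ∈ M, ∃ n ∈ N, m ∣ n) : IsLocalization N S where
  map_units n := IsLocalization.map_units S ⟨n.1, hNM n.2⟩
  surj y := by
    obtain ⟨⟨x, m⟩, hxm⟩ := IsLocalization.surj M y
    obtain ⟨n, hn, k, hk⟩ := hdvd m m.2
    refine ⟨(x * k, ⟨n, hn⟩), ?_⟩
    simp only [hk, map_mul, ← hxm]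
    ring
  exists_of_eq {x y} h := by
    obtain ⟨m, hm⟩ := IsLocalization.exists_of_eq (M := M) h
    obtain ⟨n, hn, k, hk⟩ := hdvd m m.2
    exact ⟨⟨n, hn⟩, by simp only [hk, mul_right_comm _ k, hm]⟩

theorem IsLocalization.finite_and_flat_map {R T A B : Type*} [CommRing R] [CommRing T]
    [CommRing A] [CommRing B] [Algebra R A] [Algebra T B] (M : Submonoid R) [IsLocalization M A]
    (φ : R →+* T) [IsLocalization (M.map φ) B] (hfin : φ.Finite) (hflat : φ.Flat) :
    (IsLocalization.map B φ M.le_comap_map : A →+* B).Finite ∧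
      (IsLocalization.map B φ M.le_comap_map : A →+* B).Flat := by
  let := φ.toAlgebra
  let := ((algebraMap T B).comp φ).toAlgebra
  let := (IsLocalization.map B φ M.le_comap_map : A →+* B).toAlgebra
  have : IsScalarTower R A B := .of_algebraMap_eq' (IsLocalization.map_comp M.le_comap_map).symm
  have : IsScalarTower R T B := .of_algebraMap_eq' rfl
  have : IsLocalization (Algebra.algebraMapSubmonoid T M) B := ‹IsLocalization (M.map φ) B›
  have : Module.Finite R T := hfin
  have : Module.Flat R T := hflat
  exact ⟨Module.Finite.of_isLocalizedModule M (IsScalarTower.toAlgHom R T B).toLinearMap,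
    Module.Flat.of_isLocalizedModule A M (IsScalarTower.toAlgHom R T B).toLinearMap⟩

section Frobenius

variable {R : Type*} [CommRing R] (p : ℕ) [ExpChar R p]

theorem bracketPow_eq_map_iterateFrobenius (J : Ideal R) (e : ℕ) :
    bracketPow J (p ^ e) = J.map (iterateFrobenius R p e) :=
  rfl

theorem map_bracketPow {A : Type*} [CommRing A] [ExpChar A p] (f : R →+* A) (J : Ideal R)
    (e : ℕ) : (bracketPow J (p ^ e)).map f = bracketPow (J.map f) (p ^ e) := by
  simp only [bracketPow_eq_map_iterateFrobenius, Ideal.map_map]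
  congr 1
  ext x
  simp [iterateFrobenius_def]

theorem RingHom.Finite.iterateFrobenius (h : (frobenius R p).Finite) :
    ∀ e, (iterateFrobenius R p e).Finite
  | 0 => by simpa using RingHom.Finite.id R
  | e + 1 => by
    rw [iterateFrobenius_add, iterateFrobenius_one]
    exact (h.iterateFrobenius e).comp h

theorem RingHom.Flat.iterateFrobenius (h : (frobenius R p).Flat) :
    ∀ e, (iterateFrobenius R p e).Flat
  | 0 => by simpa using RingHom.Flat.id (R := R)
  | e + 1 => by
    rw [iterateFrobenius_add, iterateFrobenius_one]
    exact h.comp (h.iterateFrobenius e)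

theorem frobRoot_le_iff [IsNoetherianRing R] (hfin : (frobenius R p).Finite)
    (hflat : (frobenius R p).Flat) {b J : Ideal R} {e : ℕ} :
    frobRoot b (p ^ e) ≤ J ↔ b ≤ bracketPow J (p ^ e) := by
  refine ⟨fun h => ?_, fun h => sInf_le h⟩
  have hb : b ≤ (frobRoot b (p ^ e)).map (iterateFrobenius R p e) := by
    rw [frobRoot, (hfin.iterateFrobenius p e).map_sInf_of_flat (hflat.iterateFrobenius p e)]
    exact le_iInf₂ fun I hI => hI
  exact hb.trans (Ideal.map_mono h)

end Frobenius

namespace IsLocalization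

variable {R Rs : Type*} [CommRing R] [CommRing Rs] [Algebra R Rs] (p : ℕ)

theorem isLocalization_submonoid_map_frobenius [ExpChar R p] (S : Submonoid R)
    [IsLocalization S Rs] :
    IsLocalization (S.map (frobenius R p)) Rs :=
  of_le_of_forall_dvd (M := S) (fun _ ⟨_, hs, hsx⟩ => hsx ▸ pow_mem hs p)
    fun s hs => ⟨s ^ p, ⟨s, hs, rfl⟩, dvd_pow_self s (expChar_pos R p).ne'⟩

theorem frobenius_finite_and_flat [ExpChar R p] [ExpChar Rs p] (S : Submonoid R)
    [IsLocalization S Rs] (hfin : (frobenius R p).Finite) (hflat : (frobenius R p).Flat) :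
    (frobenius Rs p).Finite ∧ (frobenius Rs p).Flat := by
  have := isLocalization_submonoid_map_frobenius (Rs := Rs) p S
  have hmap : frobenius Rs p = IsLocalization.map Rs (frobenius R p) S.le_comap_map :=
    IsLocalization.ringHom_ext S (by ext x; simp [frobenius_def])
  rw [hmap]
  exact finite_and_flat_map S (frobenius R p) hfin hflat

theorem colon_singleton_comap (S : Submonoid R) [IsLocalization S Rs] (J : Ideal Rs) {w : R}
    (hw : w ∈ S) : (J.comap (algebraMap R Rs)).colon {w} = J.comap (algebraMap R Rs) := by
  ext x
  rw [Submodule.mem_colon_singleton, Ideal.mem_comap, Ideal.mem_comap, smul_eq_mul, map_mul,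
    Ideal.mul_unit_mem_iff_mem _ (map_units Rs ⟨w, hw⟩)]

variable [IsNoetherianRing R] [ExpChar R p] [ExpChar Rs p]

theorem comap_bracketPow (S : Submonoid R) [IsLocalization S Rs] (hfin : (frobenius R p).Finite)
    (hflat : (frobenius R p).Flat) (J : Ideal Rs) (e : ℕ) :
    (bracketPow J (p ^ e)).comap (algebraMap R Rs) =
      bracketPow (J.comap (algebraMap R Rs)) (p ^ e) := by
  have hJ : (J.comap (algebraMap R Rs)).map (algebraMap R Rs) = J := map_under S Rs J
  refine le_antisymm (fun x hx => ?_) ?_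
  · rw [Ideal.mem_comap, ← hJ, ← map_bracketPow, algebraMap_mem_map_algebraMap_iff S] at hx
    obtain ⟨w, hw, hwx⟩ := hx
    have hq : p ^ e - 1 + 1 = p ^ e := Nat.sub_add_cancel (pow_pos (expChar_pos R p) e)
    have hFwx : iterateFrobenius R p e w * x = w ^ (p ^ e - 1) * (w * x) := by
      rw [iterateFrobenius_def, ← mul_assoc, ← pow_succ, hq]
    rw [bracketPow_eq_map_iterateFrobenius, ← colon_singleton_comap S J hw,
      (hfin.iterateFrobenius p e).map_colon_singleton_of_flat (hflat.iterateFrobenius p e),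
      Submodule.mem_colon_singleton, smul_eq_mul, mul_comm, hFwx]
    exact Ideal.mul_mem_left _ _ hwx
  · rw [← Ideal.map_le_iff_le_comap, map_bracketPow, hJ]

theorem map_frobRoot (S : Submonoid R) [IsLocalization S Rs] (hfin : (frobenius R p).Finite)
    (hflat : (frobenius R p).Flat) (b : Ideal R) (e : ℕ) :
    (frobRoot b (p ^ e)).map (algebraMap R Rs) = frobRoot (b.map (algebraMap R Rs)) (p ^ e) := by
  have : IsNoetherianRing Rs := isNoetherianRing S Rs inferInstance
  obtain ⟨hfin', hflat'⟩ := frobenius_finite_and_flat (Rs := Rs) p S hfin hflat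
  refine eq_of_forall_ge_iff fun J => ?_
  rw [Ideal.map_le_iff_le_comap, frobRoot_le_iff p hfin hflat, frobRoot_le_iff p hfin' hflat',
    Ideal.map_le_iff_le_comap, comap_bracketPow p S hfin hflat]

theorem map_testIdeal (S : Submonoid R) [IsLocalization S Rs] (hfin : (frobenius R p).Finite)
    (hflat : (frobenius R p).Flat) (a : Ideal R) (c : ℝ) :
    (testIdeal p a c).map (algebraMap R Rs) = testIdeal p (a.map (algebraMap R Rs)) c := by
  simp only [testIdeal, Ideal.map_iSup, map_frobRoot p S hfin hflat, Ideal.map_pow]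

end IsLocalization

/-- test ideals commute with localization. -/
theorem stmt6_testIdeal_localization
    {R : Type*} [CommRing R] [IsNoetherianRing R] (p : ℕ) [Fact p.Prime] [CharP R p]
    (hfin : (frobenius R p).Finite) (hflat : (frobenius R p).Flat)
    (S : Submonoid R) (Rs : Type*) [CommRing Rs] [CharP Rs p] [Algebra R Rs]
    [IsLocalization S Rs] :
    (frobenius Rs p).Finite ∧ (frobenius Rs p).Flat ∧
      ∀ (a : Ideal R) (c : ℝ), 0 ≤ c →
        testIdeal p (a.map (algebraMap R Rs)) c =
          (testIdeal p a c).map (algebraMap R Rs) := by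
  obtain ⟨hfin', hflat'⟩ := IsLocalization.frobenius_finite_and_flat (Rs := Rs) p S hfin hflat
  exact ⟨hfin', hflat', fun a c _ => (IsLocalization.map_testIdeal p S hfin hflat a c).symm⟩
end
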